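/- For the Werner state ρ_α = (1/4)(𝟙⊗𝟙 − α σᵢ⊗σᵢ) with α > 1/3, the state ρ₀ = (1/4)(𝟙⊗𝟙 − (1/3) σᵢ⊗σᵢ) satisfies ‖ρ₀ − ρ_α‖_HS = (√3/2)(α − 1/3), and the operator A_opt = (1/(2√3))(𝟙⊗𝟙 + σᵢ⊗σᵢ) satisfies Tr(ρ_α A_opt) = −(√3/2)(α − 1/3) < 0 and Tr(ρ₀ A_opt) = 0. -/

import Mathlib

/-!
Everything reduces to three traces: `Tr 𝟙 = 4`, `Tr (σ·σ) = 0` and `Tr ((σ·σ)²) = 12`, the last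
because `Tr (σᵢ σⱼ) = 2 δᵢⱼ` and `Tr (A ⊗ B) = Tr A · Tr B`. The difference `ρ₀ − ρ_α` is the real
multiple `(α − 1/3)/4` of the Hermitian matrix `σ·σ`, whose Hilbert–Schmidt norm is `√12 = 2√3`;
and `Tr (ρ_α A_opt)` is affine in `α`, vanishing at `α = 1/3`.
-/

open Matrix Kronecker

noncomputable section

def pauli : Fin 3 → Matrix (Fin 2) (Fin 2) ℂ
  | 0 => !![0, 1; 1, 0]
  | 1 => !![0, -Complex.I; Complex.I, 0]
  | 2 => !![1, 0; 0, -1]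

/-- Σᵢ σᵢ ⊗ σᵢ. -/
def paulidot : Matrix (Fin 2 × Fin 2) (Fin 2 × Fin 2) ℂ := ∑ i, pauli i ⊗ₖ pauli i

/-- Werner state in Bloch form: ρ_α = (1/4)(𝟙⊗𝟙 − α Σᵢ σᵢ⊗σᵢ). -/
def wernerBloch (α : ℝ) : Matrix (Fin 2 × Fin 2) (Fin 2 × Fin 2) ℂ :=
  ((1 / 4 : ℝ) : ℂ) • ((1 : Matrix (Fin 2 × Fin 2) (Fin 2 × Fin 2) ℂ) - (α : ℂ) • paulidot)

/-- The nearest separable state ρ₀ = (1/4)(𝟙⊗𝟙 − (1/3) Σᵢ σᵢ⊗σᵢ). -/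
def ρ₀ : Matrix (Fin 2 × Fin 2) (Fin 2 × Fin 2) ℂ := wernerBloch (1 / 3)

/-- The optimal entanglement witness A_opt = (1/(2√3))(𝟙⊗𝟙 + Σᵢ σᵢ⊗σᵢ). -/
def Aopt : Matrix (Fin 2 × Fin 2) (Fin 2 × Fin 2) ℂ :=
  (((2 * Real.sqrt 3)⁻¹ : ℝ) : ℂ) •
    ((1 : Matrix (Fin 2 × Fin 2) (Fin 2 × Fin 2) ℂ) + paulidot)

/-- Hilbert–Schmidt norm. -/
def hsNorm (A : Matrix (Fin 2 × Fin 2) (Fin 2 × Fin 2) ℂ) : ℝ :=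
  Real.sqrt (((Aᴴ * A).trace).re)

lemma trace_pauli (i : Fin 3) : (pauli i).trace = 0 := by
  fin_cases i <;> simp [pauli, Matrix.trace_fin_two]

lemma trace_pauli_mul_pauli (i j : Fin 3) :
    (pauli i * pauli j).trace = if i = j then 2 else 0 := by
  fin_cases i <;> fin_cases j <;> norm_num [pauli, Matrix.trace_fin_two]

lemma conjTranspose_pauli (i : Fin 3) : (pauli i)ᴴ = pauli i := by
  fin_cases i <;> ext a b <;> fin_cases a <;> fin_cases b <;> simp [pauli]

lemma trace_paulidot : paulidot.trace = 0 := by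
  simp [paulidot, trace_sum, trace_kronecker, trace_pauli]

lemma conjTranspose_paulidot : paulidotᴴ = paulidot := by
  simp only [paulidot, conjTranspose_sum, conjTranspose_kronecker, conjTranspose_pauli]

lemma trace_paulidot_mul_self : (paulidot * paulidot).trace = 12 := by
  simp only [paulidot, Finset.sum_mul, Finset.mul_sum, ← mul_kronecker_mul, trace_sum,
    trace_kronecker, trace_pauli_mul_pauli]
  norm_num

lemma hsNorm_real_smul (c : ℝ) (A : Matrix (Fin 2 × Fin 2) (Fin 2 × Fin 2) ℂ) :
    hsNorm ((c : ℂ) • A) = |c| * hsNorm A := by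
  rw [hsNorm, hsNorm, conjTranspose_smul, Complex.star_def, Complex.conj_ofReal,
    smul_mul_smul_comm, trace_smul, smul_eq_mul, ← Complex.ofReal_mul, Complex.re_ofReal_mul,
    ← sq, Real.sqrt_mul (sq_nonneg c), Real.sqrt_sq_eq_abs]

lemma hsNorm_paulidot : hsNorm paulidot = 2 * Real.sqrt 3 := by
  rw [hsNorm, conjTranspose_paulidot, trace_paulidot_mul_self,
    show (12 : ℂ).re = 2 ^ 2 * 3 by norm_num, Real.sqrt_mul (by norm_num),
    Real.sqrt_sq zero_le_two]

lemma ρ₀_sub_wernerBloch (α : ℝ) : ρ₀ - wernerBloch α = (((α - 1 / 3) / 4 : ℝ) : ℂ) • paulidot := by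
  unfold ρ₀ wernerBloch
  push_cast
  module

lemma trace_wernerBloch_mul_Aopt (α : ℝ) :
    (wernerBloch α * Aopt).trace = ((-(Real.sqrt 3 / 2 * (α - 1 / 3)) : ℝ) : ℂ) := by
  have hsum : ((1 - (α : ℂ) • paulidot) * (1 + paulidot)).trace = 4 - 12 * α := by
    rw [sub_mul, mul_add, mul_add, one_mul, one_mul, smul_mul_assoc, smul_mul_assoc, mul_one,
      trace_sub, trace_add, trace_add, trace_smul, trace_smul, trace_one, trace_paulidot,
      trace_paulidot_mul_self]
    simp only [Fintype.card_prod, Fintype.card_fin, smul_eq_mul]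
    ring
  have h3 : (Real.sqrt 3 : ℂ) ^ 2 = 3 := by exact_mod_cast Real.sq_sqrt zero_le_three
  rw [wernerBloch, Aopt, smul_mul_smul_comm, trace_smul, hsum, smul_eq_mul]
  push_cast
  field_simp
  rw [h3]
  ring

theorem werner_bnt_computation_general (α : ℝ) (hα : 1 / 3 < α) :
    hsNorm (ρ₀ - wernerBloch α) = Real.sqrt 3 / 2 * (α - 1 / 3) ∧
    ((wernerBloch α * Aopt).trace : ℂ)
      = ((-(Real.sqrt 3 / 2 * (α - 1 / 3)) : ℝ) : ℂ) ∧
    ((wernerBloch α * Aopt).trace).re < 0 ∧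
    ((ρ₀ * Aopt).trace : ℂ) = 0 := by
  have hgap : 0 < α - 1 / 3 := sub_pos.2 hα
  refine ⟨?_, trace_wernerBloch_mul_Aopt α, ?_, ?_⟩
  · rw [ρ₀_sub_wernerBloch, hsNorm_real_smul, hsNorm_paulidot, abs_of_pos (by positivity)]
    ring
  · rw [trace_wernerBloch_mul_Aopt, Complex.ofReal_re, neg_lt_zero]
    positivity
  · rw [ρ₀, trace_wernerBloch_mul_Aopt]
    simp

theorem werner_bnt_computation (α : ℝ) (hα : 1 / 3 < α) (hα1 : α ≤ 1) :
    hsNorm (ρ₀ - wernerBloch α) = Real.sqrt 3 / 2 * (α - 1 / 3) ∧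
    ((wernerBloch α * Aopt).trace : ℂ)
      = ((-(Real.sqrt 3 / 2 * (α - 1 / 3)) : ℝ) : ℂ) ∧
    ((wernerBloch α * Aopt).trace).re < 0 ∧
    ((ρ₀ * Aopt).trace : ℂ) = 0 :=
  werner_bnt_computation_general α hα

end
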